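/- Let n = 1 and d_j = j^{−2} for j ∈ ℕ. Suppose K ∈ L¹(ℝ) is even with K(x) = J(|x|), J ∈ C¹([0,∞)), and both limits lim_{r→∞} e^{2r} J(r) and lim_{r→∞} e^{2r} J'(r) exist; set h(λ) := J(−log λ)/λ for λ ∈ (0,1] and h(0) := lim_{r→∞} e^r J(r) (so that h'(λ) = −e^{2r}(J'(r) + J(r)) with r = −log λ, and h'(0) := lim_{r→∞} −e^{2r}(J(r) + J'(r))). Then for any N ∈ ℕ and any real α₁, …, α_{N+1}, ‖K − K_{N+1}‖_{W^{1,1}(ℝ)} ≤ 4 · max_{λ∈[0,1]} |h(λ) − P_N(λ)| + max_{λ∈[0,1]} |h'(λ) − P_N'(λ)|, where P_N(λ) := Σ_{j=0}^N α_{j+1} ((j+1)/2) λ^j and K_{N+1} := Σ_{j=1}^{N+1} α_j k_j. -/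

import Mathlib

open MeasureTheory Real Set Filter
open scoped ENNReal NNReal

noncomputable section

/-- Euclidean space `ℝⁿ`. -/
abbrev Eu (n : ℕ) := EuclideanSpace ℝ (Fin n)

/-- The heat kernel `H(t,x;D) = (4πDt)^{-n/2} exp(-|x|²/(4Dt))`. -/
noncomputable def heatK (n : ℕ) (D t : ℝ) (x : Eu n) : ℝ :=
  (4 * π * D * t) ^ (-(n : ℝ) / 2) * Real.exp (-‖x‖ ^ 2 / (4 * D * t))

/-- Spatial convolution `(K*u)(x) = ∫ K(x-y) u(y) dy`. -/
noncomputable def conv {n : ℕ} (K u : Eu n → ℝ) (x : Eu n) : ℝ := ∫ y, K (x - y) * u y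

/-- Membership in `BC(ℝⁿ) ∩ Lᵖ(ℝⁿ)`. -/
def InBCLp {n : ℕ} (p : ℝ≥0∞) (g : Eu n → ℝ) : Prop :=
  Continuous g ∧ (∃ M, ∀ x, |g x| ≤ M) ∧ MemLp g p volume

/-- `u ∈ C([0,T]; BC(ℝⁿ) ∩ Lᵖ(ℝⁿ))`: membership for every time, and continuity in
time with respect to the sup-norm together with the `Lᵖ` norm. -/
def ContBCLp {n : ℕ} (T : ℝ) (p : ℝ≥0∞) (u : ℝ → Eu n → ℝ) : Prop :=
  (∀ t ∈ Icc (0:ℝ) T, InBCLp p (u t)) ∧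
  ∀ t₀ ∈ Icc (0:ℝ) T,
    Tendsto (fun t => eLpNorm (fun x => u t x - u t₀ x) ⊤ volume
      + eLpNorm (fun x => u t x - u t₀ x) p volume) (nhdsWithin t₀ (Icc 0 T)) (nhds 0)

/-- `f(0,0) = 0` together with the global Lipschitz estimate with constant `Cf`. -/
def LipF (f : ℝ → ℝ → ℝ) (Cf : ℝ) : Prop :=
  f 0 0 = 0 ∧ 0 < Cf ∧ ∀ u₁ v₁ u₂ v₂ : ℝ, |f u₁ v₁ - f u₂ v₂| ≤ Cf * (|u₁ - u₂| + |v₁ - v₂|)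

/-- A radial function on `ℝⁿ`. -/
def IsRadial {n : ℕ} (K : Eu n → ℝ) : Prop := ∀ x y : Eu n, ‖x‖ = ‖y‖ → K x = K y

/-- Mild solution of the nonlocal problem (NP) on `[0,T]`. -/
def IsMildNP {n : ℕ} (D : ℝ) (f : ℝ → ℝ → ℝ) (K : Eu n → ℝ) (p : ℝ≥0∞) (T : ℝ)
    (u₀ : Eu n → ℝ) (u : ℝ → Eu n → ℝ) : Prop :=
  ContBCLp T p u ∧ u 0 = u₀ ∧
  ∀ t ∈ Ioc (0:ℝ) T, ∀ x,
    u t x = conv (heatK n D t) u₀ x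
      + ∫ s in (0:ℝ)..t, conv (heatK n D (t - s)) (fun y => f (u s y) (conv K (u s) y)) x

/-- The modified Bessel function of the second kind
`M_ν(r) = ∫₀^∞ e^{-r cosh s} cosh (ν s) ds`. -/
noncomputable def besselM (ν r : ℝ) : ℝ :=
  ∫ s in Ioi (0:ℝ), Real.exp (-r * Real.cosh s) * Real.cosh (ν * s)

/-- `G(r) = (2π)^{-n/2} (1/r)^{n/2-1} M_{n/2-1}(r)`. -/
noncomputable def greenG (n : ℕ) (r : ℝ) : ℝ :=
  (2 * π) ^ (-(n : ℝ) / 2) * r ^ (-((n : ℝ) / 2 - 1)) * besselM ((n : ℝ) / 2 - 1) r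

/-- The Green function `k_d(x) = d^{-n/2} G(|x|/√d)` of `-dΔ + 1` on `ℝⁿ`. -/
noncomputable def greenK (n : ℕ) (d : ℝ) (x : Eu n) : ℝ :=
  d ^ (-(n : ℝ) / 2) * greenG n (‖x‖ / Real.sqrt d)

/-- Mild solution of the reaction–diffusion system (RD_δ) on `[0,T]` with the
initial condition `(u₀, k₁*u₀, …, k_N*u₀)`. -/
def IsMildRD {n : ℕ} (N : ℕ) (D δ : ℝ) (f : ℝ → ℝ → ℝ) (α d : Fin N → ℝ) (p : ℝ≥0∞) (T : ℝ)
    (u₀ : Eu n → ℝ) (u : ℝ → Eu n → ℝ) (v : Fin N → ℝ → Eu n → ℝ) : Prop :=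
  ContBCLp T p u ∧ (∀ j, ContBCLp T p (v j)) ∧
  u 0 = u₀ ∧ (∀ j, v j 0 = conv (greenK n (d j)) u₀) ∧
  (∀ t ∈ Ioc (0:ℝ) T, ∀ x,
    u t x = conv (heatK n D t) u₀ x
      + ∫ s in (0:ℝ)..t, conv (heatK n D (t - s))
          (fun y => f (u s y) (∑ j, α j * v j s y)) x) ∧
  (∀ j, ∀ t ∈ Ioc (0:ℝ) T, ∀ x,
    v j t x = Real.exp (-t / δ) * conv (heatK n (d j / δ) t) (conv (greenK n (d j)) u₀) x
      + (1 / δ) * ∫ s in (0:ℝ)..t,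
          Real.exp (-(t - s) / δ) * conv (heatK n (d j / δ) (t - s)) (u s) x)

/-- The Laplacian of `g : ℝⁿ → ℝ`. -/
noncomputable def lap {n : ℕ} (g : Eu n → ℝ) (x : Eu n) : ℝ :=
  ∑ i : Fin n, iteratedFDeriv ℝ 2 g x ![EuclideanSpace.single i 1, EuclideanSpace.single i 1]

/-- `u ∈ C^{1,2}((0,T] × ℝⁿ)`. -/
def IsC12 {n : ℕ} (T : ℝ) (u : ℝ → Eu n → ℝ) : Prop :=
  (∀ x, DifferentiableOn ℝ (fun t => u t x) (Ioc 0 T)) ∧ ∀ t ∈ Ioc (0:ℝ) T, ContDiff ℝ 2 (u t)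

/-- Classical solution of (NP) on `(0,T]`. -/
def IsClassicalNP {n : ℕ} (D : ℝ) (f : ℝ → ℝ → ℝ) (K : Eu n → ℝ) (p : ℝ≥0∞) (T : ℝ)
    (u₀ : Eu n → ℝ) (u : ℝ → Eu n → ℝ) : Prop :=
  ContBCLp T p u ∧ u 0 = u₀ ∧ IsC12 T u ∧
  ∀ t ∈ Ioc (0:ℝ) T, ∀ x,
    HasDerivAt (fun s => u s x) (D * lap (u t) x + f (u t x) (conv K (u t) x)) t

/-- The Abel-type transform `A(r) = -(2r/π) ∫₀^∞ J'(r cosh s) ds`. -/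
noncomputable def abelA (J : ℝ → ℝ) (r : ℝ) : ℝ :=
  -(2 * r / π) * ∫ s in Ioi (0:ℝ), deriv J (r * Real.cosh s)

/-- The modulus of continuity of `g` on `[0,1]`. -/
noncomputable def modCont (g : ℝ → ℝ) (η : ℝ) : ℝ :=
  sSup {c | ∃ l₁ ∈ Icc (0:ℝ) 1, ∃ l₂ ∈ Icc (0:ℝ) 1, |l₁ - l₂| ≤ η ∧ c = |g l₁ - g l₂|}

/-- The Bernstein coefficients `β_{j,N}[h]`. -/
noncomputable def bernCoef (h : ℝ → ℝ) (N j : ℕ) : ℝ :=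
  ∑ ν ∈ Finset.range (j + 1),
    (-1 : ℝ) ^ (j - ν) * h ((ν : ℝ) / (N : ℝ)) * (N.choose j : ℝ) * (j.choose ν : ℝ)

/-- The constants `c_{j,n}`. -/
noncomputable def cjn (n j : ℕ) : ℝ :=
  if n = 1 then ((j : ℝ) + 1) / 2
  else if n = 2 then ((j : ℝ) + 1) ^ 2 / (2 * π)
  else ((j : ℝ) + 1) ^ 2 / (4 * π)

/-- The Chebyshev nodes `r_{j,N+1} = 1/2 + (1/2) cos((2j+1)π/(2(N+1)))`. -/
noncomputable def chebNode (N : ℕ) (j : Fin (N + 1)) : ℝ :=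
  1 / 2 + Real.cos ((2 * (j : ℝ) + 1) * π / (2 * ((N : ℝ) + 1))) / 2

/-- The coefficients `l_{j,N}[h]` of the monomial expansion of the Lagrange
interpolation polynomial of `h` at the Chebyshev nodes `r_{0,N+1}, …, r_{N,N+1}`. -/
noncomputable def lagCoef (h : ℝ → ℝ) (N j : ℕ) : ℝ :=
  ((Lagrange.interpolate (Finset.univ : Finset (Fin (N + 1))) (chebNode N))
    (fun i => h (chebNode N i))).coeff j

/-- The dimension-dependent assumption on the kernel `K`, together with the
associated function `h` on `[0,1]` (Assumption 2.1 of the paper). -/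
def KernelAssumptionH (n : ℕ) (K : Eu n → ℝ) (h : ℝ → ℝ) : Prop :=
  Integrable K volume ∧
  ((n = 1 ∧ ∃ J : ℝ → ℝ, (∀ x, K x = J ‖x‖) ∧ ContinuousOn J (Ici 0) ∧
      ∃ L, Tendsto (fun r => Real.exp r * J r) atTop (nhds L) ∧
        h 0 = L ∧ ∀ lam ∈ Ioc (0:ℝ) 1, h lam = J (-Real.log lam) / lam) ∨
   (n = 2 ∧ ∃ J : ℝ → ℝ, (∀ x, K x = J ‖x‖) ∧ ContDiffOn ℝ 1 J (Ici 0) ∧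
      (∃ a > (1/2 : ℝ), ∃ L, Tendsto (fun r => r ^ a * Real.exp r * deriv J r) atTop (nhds L)) ∧
      h 0 = 0 ∧ ∀ lam ∈ Ioc (0:ℝ) 1, h lam = abelA J (-Real.log lam) / lam) ∨
   (n = 3 ∧ ∃ J : ℝ → ℝ, (∀ x, x ≠ 0 → K x = J ‖x‖) ∧ ContinuousOn J (Ioi 0) ∧
      (∃ L₀, Tendsto (fun r => r * J r) (nhdsWithin 0 (Ioi 0)) (nhds L₀) ∧ h 1 = L₀) ∧
      (∃ Li, Tendsto (fun r => r * Real.exp r * J r) atTop (nhds Li) ∧ h 0 = Li) ∧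
      ∀ lam ∈ Ioo (0:ℝ) 1, h lam = -Real.log lam * J (-Real.log lam) / lam))

/-- The dimension-dependent assumption on the kernel `K` (Assumption 2.1). -/
def KernelAssumption (n : ℕ) (K : Eu n → ℝ) : Prop :=
  Integrable K volume ∧
  ((n = 1 ∧ ∃ J : ℝ → ℝ, (∀ x, K x = J ‖x‖) ∧ ContinuousOn J (Ici 0) ∧
      ∃ L, Tendsto (fun r => Real.exp r * J r) atTop (nhds L)) ∨
   (n = 2 ∧ ∃ J : ℝ → ℝ, (∀ x, K x = J ‖x‖) ∧ ContDiffOn ℝ 1 J (Ici 0) ∧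
      ∃ a > (1/2 : ℝ), ∃ L, Tendsto (fun r => r ^ a * Real.exp r * deriv J r) atTop (nhds L)) ∨
   (n = 3 ∧ ∃ J : ℝ → ℝ, (∀ x, x ≠ 0 → K x = J ‖x‖) ∧ ContinuousOn J (Ioi 0) ∧
      (∃ L₀, Tendsto (fun r => r * J r) (nhdsWithin 0 (Ioi 0)) (nhds L₀)) ∧
      (∃ Li, Tendsto (fun r => r * Real.exp r * J r) atTop (nhds Li))))

/-!
With `λ = e^{-|x|}` one has `e^{-(j+1)|x|} = λ^{j+1}`, so `K - K_{N+1} = λ (h - P_N)(λ)`, and for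
`x ≠ 0` the derivative `(K - K_{N+1})'(x)` equals `∓(λ² (h - P_N)'(λ) + λ (h - P_N)(λ))`.
Hence `|K - K_{N+1}| ≤ C e^{-|x|}` everywhere and `|(K - K_{N+1})'| ≤ C' e^{-2|x|} + C e^{-|x|}`
off the null set `{0}`; integrating with `∫ e^{-a|x|} = 2/a` gives `2C + (C' + 2C)`.
-/

theorem integrable_comp_abs {f : ℝ → ℝ} (hf : IntegrableOn f (Ioi 0)) :
    Integrable fun x => f |x| := by
  have hpos : IntegrableOn (fun x => f |x|) (Ioi 0) :=
    hf.congr_fun (fun x hx => by rw [abs_of_pos (mem_Ioi.mp hx)]) measurableSet_Ioi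
  have hneg : IntegrableOn (fun x => f |x|) (Iic 0) := by
    have hm : MeasurableEmbedding (Neg.neg : ℝ → ℝ) := (Homeomorph.neg ℝ).measurableEmbedding
    rw [IntegrableOn, ← Measure.map_neg_eq_self (volume : Measure ℝ), ← IntegrableOn,
      hm.integrableOn_map_iff]
    simpa only [Function.comp_def, abs_neg, neg_preimage, neg_Iic, neg_zero]
      using (integrableOn_Ici_iff_integrableOn_Ioi (f := fun x => f |x|)).mpr hpos
  simpa only [Iic_union_Ioi, integrableOn_univ] using hneg.union hpos

theorem integrable_exp_neg_mul_abs {a : ℝ} (ha : 0 < a) :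
    Integrable fun x : ℝ => exp (-(a * |x|)) :=
  integrable_comp_abs (f := fun x => exp (-(a * x)))
    (by simpa only [neg_mul] using exp_neg_integrableOn_Ioi 0 ha)

theorem integral_exp_neg_mul_abs {a : ℝ} (ha : 0 < a) :
    ∫ x : ℝ, exp (-(a * |x|)) = 2 / a := by
  have h := integral_comp_mul_left_Ioi (fun y : ℝ => exp (-y)) 0 ha
  rw [integral_exp_neg_Ioi, mul_zero, neg_zero, exp_zero, smul_eq_mul, mul_one] at h
  rw [integral_comp_abs (f := fun x => exp (-(a * x))), h, div_eq_mul_inv]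

theorem integral_abs_le_of_abs_le_exp_neg_abs {f : ℝ → ℝ} {A B : ℝ}
    (hf : ∀ᵐ x, |f x| ≤ A * exp (-(2 * |x|)) + B * exp (-(1 * |x|))) :
    ∫ x, |f x| ≤ A + 2 * B := by
  have h1 := integrable_exp_neg_mul_abs one_pos
  have h2 := integrable_exp_neg_mul_abs two_pos
  calc ∫ x, |f x| ≤ ∫ x, (A * exp (-(2 * |x|)) + B * exp (-(1 * |x|))) :=
        integral_mono_of_nonneg (.of_forall fun x => abs_nonneg _)
          ((h2.const_mul A).add (h1.const_mul B)) hf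
    _ = A + 2 * B := by
      rw [integral_add (h2.const_mul A) (h1.const_mul B), integral_const_mul,
        integral_const_mul, integral_exp_neg_mul_abs one_pos, integral_exp_neg_mul_abs two_pos]
      ring

theorem abs_deriv_comp_abs {G : ℝ → ℝ} {x : ℝ} (hx : x ≠ 0) (hG : DifferentiableAt ℝ G |x|) :
    |deriv (fun y => G |y|) x| = |deriv G (|x|)| := by
  rw [show (fun y => G |y|) = G ∘ abs from rfl, deriv_comp x hG (differentiableAt_abs hx),
    abs_mul]
  rcases hx.lt_or_gt with hx | hx
  · rw [deriv_abs_neg hx, abs_neg, abs_one, mul_one]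
  · rw [deriv_abs_pos hx, abs_one, mul_one]

theorem exp_neg_natCast_add_one_mul (j : ℕ) (r : ℝ) :
    exp (-((j : ℝ) + 1) * r) = exp (-r) ^ (j + 1) := by
  rw [← exp_nat_mul]
  push_cast
  ring_nf

section KernelSum

variable {n : ℕ} (c : Fin n → ℝ)

theorem hasDerivAt_sum_exp_neg (x : ℝ) :
    HasDerivAt (fun y => ∑ j, c j * exp (-((j : ℝ) + 1) * y))
      (-∑ j, c j * ((j : ℝ) + 1) * exp (-((j : ℝ) + 1) * x)) x := by
  rw [← Finset.sum_neg_distrib]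
  refine HasDerivAt.fun_sum fun j _ => ?_
  have h := (((hasDerivAt_id x).const_mul (-((j : ℝ) + 1))).exp).const_mul (c j)
  exact h.congr_deriv (by simp only [id]; ring)

theorem hasDerivAt_sub_sum_exp_neg {g : ℝ → ℝ} {x : ℝ} (hg : DifferentiableAt ℝ g x) :
    HasDerivAt (fun y => g y - ∑ j, c j * exp (-((j : ℝ) + 1) * y))
      (deriv g x + ∑ j, c j * ((j : ℝ) + 1) * exp (-((j : ℝ) + 1) * x)) x := by
  rw [← sub_neg_eq_add]
  exact hg.hasDerivAt.fun_sub (hasDerivAt_sum_exp_neg c x)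

/-- The factor `j` kills the `j = 0` term, the only one where `j - 1` truncates. -/
theorem sq_mul_sum_pow_pred (l : ℝ) :
    l ^ 2 * ∑ j, c j * (j : ℝ) * l ^ ((j : ℕ) - 1) = ∑ j, c j * (j : ℝ) * l ^ ((j : ℕ) + 1) := by
  rw [Finset.mul_sum]
  refine Finset.sum_congr rfl fun j _ => ?_
  rcases Nat.eq_zero_or_pos (j : ℕ) with h | h
  · simp [h]
  · rw [show (j : ℕ) + 1 = (j : ℕ) - 1 + 2 by omega, pow_add]
    ring

theorem sub_sum_exp_neg_eq (a r : ℝ) :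
    a - ∑ j, c j * exp (-((j : ℝ) + 1) * r)
      = exp (-r) * (a / exp (-r) - ∑ j, c j * exp (-r) ^ (j : ℕ)) := by
  rw [mul_sub, mul_div_cancel₀ _ (exp_pos _).ne', Finset.mul_sum]
  congr 1
  refine Finset.sum_congr rfl fun j _ => ?_
  rw [exp_neg_natCast_add_one_mul, pow_succ]
  ring

variable {g g' : ℝ → ℝ} {C C' r : ℝ}

theorem abs_sub_sum_exp_neg_le (hr : 0 ≤ r)
    (hC : ∀ lam ∈ Ioc (0 : ℝ) 1, |g (-log lam) / lam - ∑ j, c j * lam ^ (j : ℕ)| ≤ C) :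
    |g r - ∑ j, c j * exp (-((j : ℝ) + 1) * r)| ≤ C * exp (-r) := by
  have hl : exp (-r) ∈ Ioc (0 : ℝ) 1 := ⟨exp_pos _, exp_le_one_iff.mpr (by linarith)⟩
  have h := hC _ hl
  rw [log_exp, neg_neg] at h
  rw [sub_sum_exp_neg_eq, abs_mul, abs_of_pos hl.1, mul_comm C]
  exact mul_le_mul_of_nonneg_left h hl.1.le

theorem abs_add_sum_exp_neg_le (hr : 0 ≤ r)
    (hC : ∀ lam ∈ Ioc (0 : ℝ) 1, |g (-log lam) / lam - ∑ j, c j * lam ^ (j : ℕ)| ≤ C)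
    (hC' : ∀ lam ∈ Ioc (0 : ℝ) 1, |-((g' (-log lam) + g (-log lam)) / lam ^ 2)
        - ∑ j, c j * (j : ℝ) * lam ^ ((j : ℕ) - 1)| ≤ C') :
    |g' r + ∑ j, c j * ((j : ℝ) + 1) * exp (-((j : ℝ) + 1) * r)|
      ≤ C' * exp (-(2 * r)) + C * exp (-r) := by
  set l := exp (-r) with hl_def
  have hl : l ∈ Ioc (0 : ℝ) 1 := ⟨exp_pos _, exp_le_one_iff.mpr (by linarith)⟩
  have hB := hC l hl
  have hA := hC' l hl
  rw [hl_def, log_exp, neg_neg, ← hl_def] at hA hB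
  have key : g' r + ∑ j, c j * ((j : ℝ) + 1) * exp (-((j : ℝ) + 1) * r)
      = -(l ^ 2 * (-((g' r + g r) / l ^ 2) - ∑ j, c j * (j : ℝ) * l ^ ((j : ℕ) - 1)))
        - l * (g r / l - ∑ j, c j * l ^ (j : ℕ)) := by
    have hsum : ∑ j, c j * ((j : ℝ) + 1) * exp (-((j : ℝ) + 1) * r)
        = ∑ j, c j * (j : ℝ) * l ^ ((j : ℕ) + 1) + l * ∑ j, c j * l ^ (j : ℕ) := by
      rw [Finset.mul_sum, ← Finset.sum_add_distrib]
      refine Finset.sum_congr rfl fun j _ => ?_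
      rw [exp_neg_natCast_add_one_mul, pow_succ]
      ring
    rw [mul_sub, mul_sub, sq_mul_sum_pow_pred, hsum, mul_neg,
      mul_div_cancel₀ _ (pow_ne_zero 2 hl.1.ne'), mul_div_cancel₀ _ hl.1.ne']
    ring
  have hl2 : l ^ 2 = exp (-(2 * r)) := by rw [hl_def, ← exp_nat_mul]; push_cast; ring_nf
  calc _ ≤ l ^ 2 * |-((g' r + g r) / l ^ 2) - ∑ j, c j * (j : ℝ) * l ^ ((j : ℕ) - 1)|
        + l * |g r / l - ∑ j, c j * l ^ (j : ℕ)| := by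
        rw [key]
        refine (abs_sub _ _).trans ?_
        rw [abs_neg, abs_mul, abs_mul, abs_of_pos (pow_pos hl.1 2), abs_of_pos hl.1]
    _ ≤ l ^ 2 * C' + l * C := by gcongr
    _ = C' * exp (-(2 * r)) + C * exp (-r) := by rw [hl2]; ring

end KernelSum

theorem statement13_general (K J : ℝ → ℝ) (L L₂ L₂' : ℝ)
    (hKJ : ∀ x : ℝ, K x = J |x|)
    (hJc : ContDiffOn ℝ 1 J (Ici 0))
    (N : ℕ) (α : Fin (N + 1) → ℝ) (C C' : ℝ)
    (hC : ∀ lam ∈ Icc (0:ℝ) 1,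
      |(if lam = 0 then L else J (-Real.log lam) / lam)
        - ∑ j : Fin (N + 1), α j * (((j : ℝ) + 1) / 2) * lam ^ (j : ℕ)| ≤ C)
    (hC' : ∀ lam ∈ Icc (0:ℝ) 1,
      |(if lam = 0 then -(L₂' + L₂) else
          -((deriv J (-Real.log lam) + J (-Real.log lam)) / lam ^ 2))
        - ∑ j : Fin (N + 1), α j * (((j : ℝ) + 1) / 2) * (j : ℝ) * lam ^ ((j : ℕ) - 1)| ≤ C') :
    (∫ x : ℝ, |K x - ∑ j : Fin (N + 1),
        α j * (((j : ℝ) + 1) / 2) * Real.exp (-((j : ℝ) + 1) * |x|)|)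
      + (∫ x : ℝ, |deriv (fun y : ℝ => K y - ∑ j : Fin (N + 1),
          α j * (((j : ℝ) + 1) / 2) * Real.exp (-((j : ℝ) + 1) * |y|)) x|)
      ≤ 4 * C + C' := by
  set c : Fin (N + 1) → ℝ := fun j => α j * (((j : ℝ) + 1) / 2)
  set G : ℝ → ℝ := fun r => J r - ∑ j, c j * exp (-((j : ℝ) + 1) * r)
  have hKG : ∀ y, K y - ∑ j : Fin (N + 1), α j * (((j : ℝ) + 1) / 2) * exp (-((j : ℝ) + 1) * |y|)
      = G |y| := fun y => by rw [hKJ]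
  have hh : ∀ lam ∈ Ioc (0 : ℝ) 1, |J (-log lam) / lam - ∑ j, c j * lam ^ (j : ℕ)| ≤ C :=
    fun lam hlam => by simpa [hlam.1.ne'] using hC lam (Ioc_subset_Icc_self hlam)
  have hh' : ∀ lam ∈ Ioc (0 : ℝ) 1, |-((deriv J (-log lam) + J (-log lam)) / lam ^ 2)
      - ∑ j, c j * (j : ℝ) * lam ^ ((j : ℕ) - 1)| ≤ C' :=
    fun lam hlam => by simpa [hlam.1.ne'] using hC' lam (Ioc_subset_Icc_self hlam)
  have hderivG : ∀ r > 0, HasDerivAt G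
      (deriv J r + ∑ j, c j * ((j : ℝ) + 1) * exp (-((j : ℝ) + 1) * r)) r := fun r hr =>
    hasDerivAt_sub_sum_exp_neg c
      (((hJc.differentiableOn one_ne_zero) r hr.le).differentiableAt (Ici_mem_nhds hr))
  have hval : ∀ x, |G (|x|)| ≤ 0 * exp (-(2 * |x|)) + C * exp (-(1 * |x|)) := fun x => by
    rw [zero_mul, zero_add, one_mul]
    exact abs_sub_sum_exp_neg_le c (abs_nonneg x) hh
  have hder : ∀ x ≠ 0, |deriv (fun y => G |y|) x|
      ≤ C' * exp (-(2 * |x|)) + C * exp (-(1 * |x|)) := fun x hx => by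
    have hpos := abs_pos.mpr hx
    rw [abs_deriv_comp_abs hx (hderivG _ hpos).differentiableAt, (hderivG _ hpos).deriv,
      one_mul]
    exact abs_add_sum_exp_neg_le c hpos.le hh hh'
  have hnull : ∀ᵐ x : ℝ, x ≠ 0 := compl_mem_ae_iff.mpr (measure_singleton 0)
  simp only [hKG]
  linarith [integral_abs_le_of_abs_le_exp_neg_abs (.of_forall hval),
    integral_abs_le_of_abs_le_exp_neg_abs (hnull.mono hder)]

/-- One-dimensional `W^{1,1}` kernel-approximation estimate:
`‖K - K_{N+1}‖_{W^{1,1}(ℝ)} ≤ 4 max |h - P_N| + max |h' - P_N'|`. -/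
theorem statement13 (K J : ℝ → ℝ) (L L₂ L₂' : ℝ)
    (hK1 : Integrable K volume) (hKJ : ∀ x : ℝ, K x = J |x|)
    (hJc : ContDiffOn ℝ 1 J (Ici 0))
    (hL : Tendsto (fun r => Real.exp r * J r) atTop (nhds L))
    (hL₂ : Tendsto (fun r => Real.exp (2 * r) * J r) atTop (nhds L₂))
    (hL₂' : Tendsto (fun r => Real.exp (2 * r) * deriv J r) atTop (nhds L₂'))
    (N : ℕ) (α : Fin (N + 1) → ℝ) (C C' : ℝ)
    (hC : ∀ lam ∈ Icc (0:ℝ) 1,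
      |(if lam = 0 then L else J (-Real.log lam) / lam)
        - ∑ j : Fin (N + 1), α j * (((j : ℝ) + 1) / 2) * lam ^ (j : ℕ)| ≤ C)
    (hC' : ∀ lam ∈ Icc (0:ℝ) 1,
      |(if lam = 0 then -(L₂' + L₂) else
          -((deriv J (-Real.log lam) + J (-Real.log lam)) / lam ^ 2))
        - ∑ j : Fin (N + 1), α j * (((j : ℝ) + 1) / 2) * (j : ℝ) * lam ^ ((j : ℕ) - 1)| ≤ C') :
    (∫ x : ℝ, |K x - ∑ j : Fin (N + 1),
        α j * (((j : ℝ) + 1) / 2) * Real.exp (-((j : ℝ) + 1) * |x|)|)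
      + (∫ x : ℝ, |deriv (fun y : ℝ => K y - ∑ j : Fin (N + 1),
          α j * (((j : ℝ) + 1) / 2) * Real.exp (-((j : ℝ) + 1) * |y|)) x|)
      ≤ 4 * C + C' :=
  statement13_general K J L L₂ L₂' hKJ hJc N α C C' hC hC'
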